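/- arXiv:2005.12360 — 5 statements merged into one kernel-verified Lean document; each statement's English description precedes it below -/
import Mathlib

section
/- For any vector X = (x_1,...,x_n) of real numbers and weights λ_1,...,λ_n with 0 < λ_i < 1 and ∑_k λ_k = 1, we have (1/2)·∑_{i,j} λ_i λ_j |e^{x_i} − e^{x_j}| ≤ ‖X‖_∞ · (∑_k λ_k e^{x_k}). -/
/-! Writing `e^a - e^b` and `e^a + e^b` around the midpoint `(a + b) / 2` turns
`|e^a - e^b| ≤ |a - b| / 2 · (e^a + e^b)` into `tanh u ≤ u` for `u = (a - b) / 2 ≥ 0`.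
With `|x_i - x_j| / 2 ≤ ‖X‖_∞`, the double sum is then at most
`‖X‖_∞ / 2 · ∑_{i,j} λ_i λ_j (e^{x_i} + e^{x_j}) = ‖X‖_∞ · ∑_k λ_k e^{x_k}`. -/

open Real Finset

lemma two_mul_exp_sub_one_le {t : ℝ} (ht : 0 ≤ t) : 2 * (exp t - 1) ≤ t * (exp t + 1) := by
  set g : ℝ → ℝ := fun t ↦ t * (exp t + 1) - 2 * (exp t - 1)
  have hg : ∀ t, HasDerivAt g (1 - (1 - t) * exp t) t := fun t ↦ by
    refine (((hasDerivAt_id' t).mul ((hasDerivAt_exp t).add_const 1)).sub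
      (((hasDerivAt_exp t).sub_const 1).const_mul 2)).congr_deriv ?_
    ring
  -- `g' ≥ 0` is `1 - t ≤ e^{-t}`
  have hg' : ∀ t, 0 ≤ deriv g t := fun t ↦ by
    have := mul_le_mul_of_nonneg_right (one_sub_le_exp_neg t) (exp_pos t).le
    rw [← exp_add, neg_add_cancel, exp_zero] at this
    rw [(hg t).deriv]
    linarith
  have := monotone_of_deriv_nonneg (fun t ↦ (hg t).differentiableAt) hg' ht
  simp only [g, exp_zero] at this
  linarith

lemma exp_sub_exp_le_of_le {a b : ℝ} (hab : b ≤ a) :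
    exp a - exp b ≤ (a - b) / 2 * (exp a + exp b) := by
  have h := mul_le_mul_of_nonneg_right (two_mul_exp_sub_one_le (sub_nonneg.2 hab))
    (exp_pos b).le
  rw [exp_sub, div_add_one (exp_pos b).ne', div_sub_one (exp_pos b).ne'] at h
  field_simp at h
  linarith

lemma abs_exp_sub_exp_le (a b : ℝ) : |exp a - exp b| ≤ |a - b| / 2 * (exp a + exp b) := by
  rcases le_total b a with hab | hab
  · rw [abs_of_nonneg (sub_nonneg.2 (exp_le_exp.2 hab)), abs_of_nonneg (sub_nonneg.2 hab)]
    exact exp_sub_exp_le_of_le hab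
  · rw [abs_sub_comm, abs_of_nonneg (sub_nonneg.2 (exp_le_exp.2 hab)), abs_sub_comm,
      abs_of_nonneg (sub_nonneg.2 hab), add_comm (exp a)]
    exact exp_sub_exp_le_of_le hab

lemma sum_sum_mul_mul_add_of_sum_eq_one {ι : Type*} [Fintype ι] {w : ι → ℝ}
    (hw : ∑ i, w i = 1) (f : ι → ℝ) :
    ∑ i, ∑ j, w i * w j * (f i + f j) = 2 * ∑ i, w i * f i := by
  simp only [mul_add, sum_add_distrib]
  rw [sum_comm (f := fun i j ↦ w i * w j * f j)]
  simp only [mul_right_comm (w _) (w _) (f _), ← sum_mul, ← mul_sum, hw, mul_one, one_mul,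
    mul_comm (f _) (w _)]
  ring

/-- Exponential smoothing inequality (α = 1 version):
for weights λ with 0 < λ i < 1 summing to 1,
(1/2)·∑_{i,j} λ i λ j |e^{x i} − e^{x j}| ≤ ‖X‖_∞ · ∑_k λ k e^{x k}. -/
theorem exp_smoothing_ineq (n : ℕ) (X lam : Fin n → ℝ)
    (hlam : ∀ i, 0 < lam i ∧ lam i < 1)
    (hsum : ∑ i, lam i = 1) :
    (1 / 2) * ∑ i, ∑ j, lam i * lam j * |Real.exp (X i) - Real.exp (X j)| ≤
      (⨆ i, |X i|) * ∑ k, lam k * Real.exp (X k) := by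
  set M := ⨆ i, |X i|
  have hM : ∀ i j, |X i - X j| / 2 ≤ M := fun i j ↦ by
    have := abs_sub (X i) (X j)
    linarith [Finite.le_ciSup (fun i ↦ |X i|) i, Finite.le_ciSup (fun i ↦ |X i|) j]
  calc (1 / 2) * ∑ i, ∑ j, lam i * lam j * |exp (X i) - exp (X j)|
      ≤ (1 / 2) * ∑ i, ∑ j, lam i * lam j * (M * (exp (X i) + exp (X j))) := by
        gcongr with i _ j _
        · exact mul_nonneg (hlam i).1.le (hlam j).1.le
        · exact (abs_exp_sub_exp_le _ _).trans (by gcongr; exact hM i j)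
    _ = M * ∑ k, lam k * exp (X k) := by
        simp only [mul_left_comm _ M, ← mul_sum, sum_sum_mul_mul_add_of_sum_eq_one hsum]
        ring
end

section
/- Let Q, Q̃ ∈ ℝ^n and β > 0. Define the Boltzmann (softmax) distribution Exp_β(Q)_j = e^{β q_j} / ∑_i e^{β q_i}. Then ∑_j |Exp_β(Q)_j − Exp_β(Q̃)_j| ≤ 2β · max_i |q_i − q̃_i|. -/
/-!
Along the segment `x + t (y - x)` the derivative of `p = softmax` is `p ⊙ (v - ⟪p, v⟫)` with
`v = y - x`; since `p` is a probability vector its ℓ¹ norm is at most `2 ‖v‖_∞`. Pairing with the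
sign vector of the total increment turns the ℓ¹ distance into a scalar function of `t`, to which
the ordinary mean value inequality applies. The theorem is the case `x = β Q`, `y = β Q̃`.
-/

open Finset Real

theorem sum_abs_sub_le_of_hasDerivAt {ι : Type*} [Fintype ι] {f f' : ℝ → ι → ℝ} {C : ℝ}
    (hf : ∀ t j, HasDerivAt (fun t => f t j) (f' t j) t) (hf' : ∀ t, ∑ j, |f' t j| ≤ C)
    {a b : ℝ} (hab : a ≤ b) : ∑ j, |f b j - f a j| ≤ C * (b - a) := by
  set s : ι → ℝ := fun j => SignType.sign (f b j - f a j)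
  have hs : ∀ j, |s j| ≤ 1 := fun j => by
    simp only [s]
    cases SignType.sign (f b j - f a j) <;> simp
  have hg : ∀ t, HasDerivAt (fun t => ∑ j, s j * f t j) (∑ j, s j * f' t j) t := fun t =>
    HasDerivAt.fun_sum fun j _ => (hf t j).const_mul (s j)
  have hg' : ∀ t, deriv (fun t => ∑ j, s j * f t j) t ≤ C := fun t => calc
    deriv (fun t => ∑ j, s j * f t j) t = ∑ j, s j * f' t j := (hg t).deriv
    _ ≤ ∑ j, |s j * f' t j| := (le_abs_self _).trans (abs_sum_le_sum_abs _ _)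
    _ ≤ ∑ j, |f' t j| := sum_le_sum fun j _ => by
      rw [abs_mul]; exact mul_le_of_le_one_left (abs_nonneg _) (hs j)
    _ ≤ C := hf' t
  calc ∑ j, |f b j - f a j| = ∑ j, s j * f b j - ∑ j, s j * f a j := by
        simp only [s, ← sum_sub_distrib, ← mul_sub, sign_mul_self]
    _ ≤ C * (b - a) :=
        image_sub_le_mul_sub_of_deriv_le (fun t => (hg t).differentiableAt) hg' hab

lemma sum_abs_mul_sub_sum_mul_le {ι : Type*} [Fintype ι] {p v : ι → ℝ} {M : ℝ}
    (hp : ∀ i, 0 ≤ p i) (hp1 : ∑ i, p i = 1) (hv : ∀ i, |v i| ≤ M) :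
    ∑ j, |p j * (v j - ∑ i, p i * v i)| ≤ 2 * M := by
  have hmean : |∑ i, p i * v i| ≤ M := calc
    |∑ i, p i * v i| ≤ ∑ i, p i * |v i| := by
      refine (abs_sum_le_sum_abs _ _).trans_eq (sum_congr rfl fun i _ => ?_)
      rw [abs_mul, abs_of_nonneg (hp i)]
    _ ≤ ∑ i, p i * M := sum_le_sum fun i _ => mul_le_mul_of_nonneg_left (hv i) (hp i)
    _ = M := by rw [← sum_mul, hp1, one_mul]
  calc ∑ j, |p j * (v j - ∑ i, p i * v i)| ≤ ∑ j, p j * (2 * M) := by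
        refine sum_le_sum fun j _ => ?_
        rw [abs_mul, abs_of_nonneg (hp j)]
        exact mul_le_mul_of_nonneg_left ((abs_sub _ _).trans (by linarith [hv j])) (hp j)
    _ = 2 * M := by rw [← sum_mul, hp1, one_mul]

section Softmax

variable {ι : Type*} [Fintype ι]

noncomputable def softmax (x : ι → ℝ) (j : ι) : ℝ :=
  exp (x j) / ∑ i, exp (x i)

lemma softmax_nonneg (x : ι → ℝ) (j : ι) : 0 ≤ softmax x j := by
  unfold softmax; positivity

lemma sum_exp_pos [Nonempty ι] (x : ι → ℝ) : 0 < ∑ i, exp (x i) :=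
  sum_pos (fun i _ => exp_pos (x i)) univ_nonempty

lemma sum_softmax [Nonempty ι] (x : ι → ℝ) : ∑ j, softmax x j = 1 := by
  simp only [softmax, ← sum_div, div_self (sum_exp_pos x).ne']

lemma hasDerivAt_softmax [Nonempty ι] {x : ℝ → ι → ℝ} {x' : ι → ℝ} {t : ℝ}
    (hx : ∀ i, HasDerivAt (fun t => x t i) (x' i) t) (j : ι) :
    HasDerivAt (fun t => softmax (x t) j)
      (softmax (x t) j * (x' j - ∑ i, softmax (x t) i * x' i)) t := by
  refine ((hx j).exp.fun_div (HasDerivAt.fun_sum fun i _ => (hx i).exp)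
    (sum_exp_pos (x t)).ne').congr_deriv ?_
  simp only [softmax, div_mul_eq_mul_div, ← sum_div]
  field_simp

theorem sum_abs_softmax_sub_le [Nonempty ι] {x y : ι → ℝ} {M : ℝ} (h : ∀ i, |y i - x i| ≤ M) :
    ∑ j, |softmax x j - softmax y j| ≤ 2 * M := by
  set z : ℝ → ι → ℝ := fun t i => x i + t * (y i - x i)
  have hz : ∀ t i, HasDerivAt (fun t => z t i) (y i - x i) t := fun t i =>
    ((hasDerivAt_id t).mul_const (y i - x i)).const_add (x i) |>.congr_deriv (one_mul _)
  have := sum_abs_sub_le_of_hasDerivAt (fun t => hasDerivAt_softmax (hz t))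
    (fun t => sum_abs_mul_sub_sum_mul_le (softmax_nonneg _) (sum_softmax _) h) zero_le_one
  simpa [z, abs_sub_comm] using this

end Softmax

/-- The Boltzmann (softmax) distribution `Exp_β(Q)_j = e^{β q_j} / ∑_i e^{β q_i}`
is Lipschitz in ℓ1-norm with respect to the sup-norm of the Q-values:
‖Exp_β(Q) − Exp_β(Q̃)‖₁ ≤ 2β‖Q − Q̃‖_∞. -/
theorem boltzmann_l1_lipschitz (n : ℕ) (β : ℝ) (hβ : 0 < β) (Q Qt : Fin n → ℝ) :
    ∑ j, |Real.exp (β * Q j) / (∑ i, Real.exp (β * Q i)) -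
          Real.exp (β * Qt j) / (∑ i, Real.exp (β * Qt i))| ≤
      2 * β * ⨆ i, |Q i - Qt i| := by
  rcases isEmpty_or_nonempty (Fin n) with _ | _
  · simp
  have hM : ∀ i, |β * Qt i - β * Q i| ≤ β * ⨆ i, |Q i - Qt i| := fun i => by
    rw [← mul_sub, abs_mul, abs_of_pos hβ, abs_sub_comm]
    exact mul_le_mul_of_nonneg_left
      (le_ciSup (f := fun i => |Q i - Qt i|) (Set.finite_range _).bddAbove i) hβ.le
  simpa only [softmax, mul_assoc] using sum_abs_softmax_sub_le hM
end

section
/- For any β > 0 and ξ ≥ 0, the function g(Q) := ∑_j (e^{β q_j}/∑_i e^{β q_i}) q_j (the Boltzmann expectation of Q under its own softmax distribution) satisfies |g(Q) − g(Q̃)| ≤ (1 + ξβ) ‖Q − Q̃‖_∞ for all vectors Q, Q̃ ∈ ℝ^n with ‖Q‖_∞ ≤ ξ. -/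
/-!
Write `g(Q) − g(Q̃)` as `(E_{Exp_β(Q)}[Q] − E_{Exp_β(Q̃)}[Q]) + E_{Exp_β(Q̃)}[Q − Q̃]`. The second
term is at most `‖Q − Q̃‖_∞`. Along the segment `Q̃ + t (Q − Q̃)` the Gibbs mean of `Q` has
derivative `β Cov(Q − Q̃, Q)`, which Cauchy–Schwarz bounds by `β ‖Q − Q̃‖_∞ ξ`; the mean value
theorem bounds the first term by the same quantity.
-/

open Real Finset

section WeightedMoments

variable {ι : Type*} [Fintype ι] {w : ι → ℝ}

theorem abs_sum_mul_le_of_abs_le (hw0 : ∀ i, 0 ≤ w i) (hw1 : ∑ i, w i = 1) {x : ι → ℝ} {c : ℝ}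
    (hx : ∀ i, |x i| ≤ c) : |∑ i, w i * x i| ≤ c :=
  calc |∑ i, w i * x i| ≤ ∑ i, |w i * x i| := abs_sum_le_sum_abs _ _
    _ ≤ ∑ i, w i * c := by
      gcongr with i
      rw [abs_mul, abs_of_nonneg (hw0 i)]
      exact mul_le_mul_of_nonneg_left (hx i) (hw0 i)
    _ = c := by rw [← sum_mul, hw1, one_mul]

theorem sum_mul_sq_le_sq_of_abs_le (hw0 : ∀ i, 0 ≤ w i) (hw1 : ∑ i, w i = 1) {x : ι → ℝ}
    {c : ℝ} (hx : ∀ i, |x i| ≤ c) : ∑ i, w i * x i ^ 2 ≤ c ^ 2 :=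
  calc ∑ i, w i * x i ^ 2 ≤ ∑ i, w i * c ^ 2 :=
        sum_le_sum fun i _ => mul_le_mul_of_nonneg_left (sq_le_sq' (abs_le.mp (hx i)).1
          (abs_le.mp (hx i)).2) (hw0 i)
    _ = c ^ 2 := by rw [← sum_mul, hw1, one_mul]

theorem sum_mul_sub_mean_sq_eq (hw1 : ∑ i, w i = 1) (x : ι → ℝ) :
    ∑ i, w i * (x i - ∑ j, w j * x j) ^ 2 = ∑ i, w i * x i ^ 2 - (∑ j, w j * x j) ^ 2 := by
  set m := ∑ j, w j * x j
  calc ∑ i, w i * (x i - m) ^ 2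
        = ∑ i, (w i * x i ^ 2 - 2 * m * (w i * x i) + m ^ 2 * w i) :=
          sum_congr rfl fun i _ => by ring
    _ = ∑ i, w i * x i ^ 2 - 2 * m * m + m ^ 2 * ∑ i, w i := by
        rw [sum_add_distrib, sum_sub_distrib, ← mul_sum, ← mul_sum]
    _ = ∑ i, w i * x i ^ 2 - m ^ 2 := by rw [hw1]; ring

/-- `|Cov(v, x)| ≤ ‖v‖_∞ ‖x‖_∞`, by Cauchy–Schwarz and `Var ≤ E[·²]`. -/
theorem abs_sum_mul_sub_mul_le (hw0 : ∀ i, 0 ≤ w i) (hw1 : ∑ i, w i = 1) {v x : ι → ℝ}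
    {d c : ℝ} (hv : ∀ i, |v i| ≤ d) (hx : ∀ i, |x i| ≤ c) :
    |∑ i, w i * (v i * x i) - (∑ i, w i * v i) * ∑ i, w i * x i| ≤ d * c := by
  obtain ⟨i₀, -⟩ : (univ : Finset ι).Nonempty := nonempty_of_sum_ne_zero (f := w) (by simp [hw1])
  have hdc : 0 ≤ d * c :=
    mul_nonneg ((abs_nonneg _).trans (hv i₀)) ((abs_nonneg _).trans (hx i₀))
  set m := ∑ i, w i * x i
  have hcov : ∑ i, w i * (v i * x i) - (∑ i, w i * v i) * m = ∑ i, w i * v i * (x i - m) := by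
    simp only [mul_sub, sum_sub_distrib, ← sum_mul]
    ring_nf
  have hcs : (∑ i, w i * v i * (x i - m)) ^ 2
      ≤ (∑ i, w i * v i ^ 2) * ∑ i, w i * (x i - m) ^ 2 :=
    sum_sq_le_sum_mul_sum_of_sq_le_mul _ (fun i _ => mul_nonneg (hw0 i) (sq_nonneg _))
      (fun i _ => mul_nonneg (hw0 i) (sq_nonneg _)) (fun i _ => le_of_eq (by ring))
  have hvar : ∑ i, w i * (x i - m) ^ 2 ≤ c ^ 2 := by
    rw [sum_mul_sub_mean_sq_eq hw1]
    nlinarith [sum_mul_sq_le_sq_of_abs_le hw0 hw1 hx, sq_nonneg m]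
  refine abs_le_of_sq_le_sq ?_ hdc
  rw [hcov, mul_pow]
  exact hcs.trans (mul_le_mul (sum_mul_sq_le_sq_of_abs_le hw0 hw1 hv) hvar
    (sum_nonneg fun i _ => mul_nonneg (hw0 i) (sq_nonneg _)) (sq_nonneg _))

end WeightedMoments

section Gibbs

variable {ι : Type*} [Fintype ι]

/-- The softmax distribution `Exp_β(q)` of the paper. -/
noncomputable def gibbs (β : ℝ) (q : ι → ℝ) (j : ι) : ℝ :=
  exp (β * q j) / ∑ i, exp (β * q i)

/-- The expectation `E_{Exp_β(q)}[x]`. -/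
noncomputable def gibbsMean (β : ℝ) (q x : ι → ℝ) : ℝ :=
  ∑ j, gibbs β q j * x j

theorem gibbs_nonneg (β : ℝ) (q : ι → ℝ) (j : ι) : 0 ≤ gibbs β q j :=
  div_nonneg (exp_pos _).le (sum_nonneg fun _ _ => (exp_pos _).le)

theorem sum_gibbs [Nonempty ι] (β : ℝ) (q : ι → ℝ) : ∑ j, gibbs β q j = 1 := by
  simp only [gibbs]
  rw [← sum_div, div_self (sum_pos (fun _ _ => exp_pos _) univ_nonempty).ne']

theorem gibbsMean_sub (β : ℝ) (q x y : ι → ℝ) :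
    gibbsMean β q (x - y) = gibbsMean β q x - gibbsMean β q y := by
  simp only [gibbsMean, Pi.sub_apply, mul_sub, sum_sub_distrib]

theorem hasDerivAt_gibbsMean_add_smul [Nonempty ι] (β : ℝ) (q v x : ι → ℝ) (t : ℝ) :
    HasDerivAt (fun s => gibbsMean β (q + s • v) x)
      (β * (gibbsMean β (q + t • v) (v * x) -
        gibbsMean β (q + t • v) v * gibbsMean β (q + t • v) x)) t := by
  set e : ℝ → ι → ℝ := fun s j => exp (β * (q j + s * v j))
  have he : ∀ j, HasDerivAt (fun s => e s j) (e t j * (β * v j)) t := fun j => by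
    simpa using ((((hasDerivAt_id t).mul_const (v j)).const_add (q j)).const_mul β).exp
  have hZ : HasDerivAt (fun s => ∑ j, e s j) (∑ j, e t j * (β * v j)) t :=
    HasDerivAt.fun_sum fun j _ => he j
  have hN : HasDerivAt (fun s => ∑ j, e s j * x j) (∑ j, e t j * (β * v j) * x j) t :=
    HasDerivAt.fun_sum fun j _ => (he j).mul_const (x j)
  have hZpos : 0 < ∑ j, e t j := sum_pos (fun _ _ => exp_pos _) univ_nonempty
  have hmean : ∀ s y, gibbsMean β (q + s • v) y = (∑ j, e s j * y j) / ∑ j, e s j := by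
    intro s y
    simp only [gibbsMean, gibbs, sum_div, div_mul_eq_mul_div, e, Pi.add_apply, Pi.smul_apply,
      smul_eq_mul]
  simp only [hmean]
  refine (hN.div hZ hZpos.ne').congr_deriv ?_
  have hβv : ∑ j, e t j * (β * v j) = β * ∑ j, e t j * v j := by
    rw [mul_sum]; exact sum_congr rfl fun j _ => by ring
  have hβvx : ∑ j, e t j * (β * v j) * x j = β * ∑ j, e t j * (v * x) j := by
    rw [mul_sum]; exact sum_congr rfl fun j _ => by simp only [Pi.mul_apply]; ring
  rw [hβv, hβvx]
  field_simp

theorem abs_gibbsMean_sub_gibbsMean_le [Nonempty ι] {β d c : ℝ} (hβ : 0 ≤ β) {p q x : ι → ℝ}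
    (hpq : ∀ j, |p j - q j| ≤ d) (hx : ∀ j, |x j| ≤ c) :
    |gibbsMean β p x - gibbsMean β q x| ≤ β * (d * c) := by
  have hderiv : ∀ t : ℝ, |gibbsMean β (q + t • (p - q)) ((p - q) * x) -
      gibbsMean β (q + t • (p - q)) (p - q) * gibbsMean β (q + t • (p - q)) x| ≤ d * c :=
    fun t => abs_sum_mul_sub_mul_le (gibbs_nonneg β _) (sum_gibbs β _) hpq hx
  have key := norm_image_sub_le_of_norm_deriv_le_segment_01' (C := β * (d * c))
    (fun t _ => (hasDerivAt_gibbsMean_add_smul β q (p - q) x t).hasDerivWithinAt)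
    fun t _ => by
      rw [norm_mul, norm_of_nonneg hβ]
      exact mul_le_mul_of_nonneg_left (hderiv t) hβ
  simpa using key

end Gibbs

theorem soft_value_lipschitz_general (n : ℕ) (β ξ : ℝ) (hβ : 0 < β)
    (Q Qt : Fin n → ℝ) (hQ : ∀ j, |Q j| ≤ ξ) :
    |(∑ j, Real.exp (β * Q j) / (∑ i, Real.exp (β * Q i)) * Q j) -
      ∑ j, Real.exp (β * Qt j) / (∑ i, Real.exp (β * Qt i)) * Qt j| ≤
      (1 + ξ * β) * ⨆ i, |Q i - Qt i| := by
  rcases isEmpty_or_nonempty (Fin n) with _ | _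
  · simp
  set d := ⨆ i, |Q i - Qt i|
  have hd : ∀ j, |Q j - Qt j| ≤ d := le_ciSup (Finite.bddAbove_range _)
  have hweights : |gibbsMean β Q Q - gibbsMean β Qt Q| ≤ β * (d * ξ) :=
    abs_gibbsMean_sub_gibbsMean_le hβ.le hd hQ
  have hvalues : |gibbsMean β Qt (Q - Qt)| ≤ d :=
    abs_sum_mul_le_of_abs_le (gibbs_nonneg β Qt) (sum_gibbs β Qt) hd
  calc |gibbsMean β Q Q - gibbsMean β Qt Qt|
      = |(gibbsMean β Q Q - gibbsMean β Qt Q) + gibbsMean β Qt (Q - Qt)| := by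
        rw [gibbsMean_sub]; congr 1; ring
    _ ≤ β * (d * ξ) + d := (abs_add_le _ _).trans (add_le_add hweights hvalues)
    _ = (1 + ξ * β) * d := by ring

/-- Lipschitz property of the soft value function g(Q) = E_{Exp_β(Q)}[Q]:
if ‖Q‖_∞ ≤ ξ then |g(Q) − g(Q̃)| ≤ (1 + ξβ)‖Q − Q̃‖_∞. -/
theorem soft_value_lipschitz (n : ℕ) (β ξ : ℝ) (hβ : 0 < β) (hξ : 0 ≤ ξ)
    (Q Qt : Fin n → ℝ) (hQ : ∀ j, |Q j| ≤ ξ) :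
    |(∑ j, Real.exp (β * Q j) / (∑ i, Real.exp (β * Q i)) * Q j) -
      ∑ j, Real.exp (β * Qt j) / (∑ i, Real.exp (β * Qt i)) * Qt j| ≤
      (1 + ξ * β) * ⨆ i, |Q i - Qt i| :=
  soft_value_lipschitz_general n β ξ hβ Q Qt hQ
end

section
/- Let A ∈ ℝ^{n×n} be the matrix with A_{ij} = α_i − α_j for a fixed vector α, and let w ∈ ℝ^n have positive entries. Then for any choice of signs b ∈ {−1,+1}^n, |(b ∘ w)^T A w| ≤ 2 ‖α‖_d (∑_{i ∈ I_+} w_i)(∑_{j ∈ I_−} w_j), where I_± are the index sets where b_i = ±1, b ∘ w denotes the entrywise product, and ‖α‖_d = max_{i,j}|α_i − α_j|. -/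
/-!
The kernel `(a i - a j) w i w j` is antisymmetric, so its sum over each sign class vanishes and the
two cross blocks `I₊ × I₋`, `I₋ × I₊` contribute equally: the form equals
`2 ∑_{i ∈ I₊} ∑_{j ∈ I₋} (a i - a j) w i w j`, whose terms are bounded by `‖a‖_d w i w j`.
-/

open Finset

variable {ι : Type*}

theorem Finset.sum_sum_eq_neg_of_antisymm (s t : Finset ι) {g : ι → ι → ℝ}
    (hg : ∀ i j, g j i = -g i j) : ∑ i ∈ t, ∑ j ∈ s, g i j = -∑ i ∈ s, ∑ j ∈ t, g i j := by
  rw [Finset.sum_comm, ← sum_neg_distrib]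
  exact sum_congr rfl fun i _ => by rw [← sum_neg_distrib]; exact sum_congr rfl fun j _ => hg i j

theorem Finset.sum_sum_eq_zero_of_antisymm (s : Finset ι) {g : ι → ι → ℝ}
    (hg : ∀ i j, g j i = -g i j) : ∑ i ∈ s, ∑ j ∈ s, g i j = 0 := by
  linarith [s.sum_sum_eq_neg_of_antisymm s hg]

section Fintype

variable [Fintype ι] {b : ι → ℝ}

theorem sum_eq_sum_filter_add_sum_filter_of_sign (hb : ∀ i, b i = 1 ∨ b i = -1) (f : ι → ℝ) :
    ∑ i, f i = ∑ i ∈ univ.filter (b · = 1), f i + ∑ i ∈ univ.filter (b · = -1), f i := by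
  rw [← sum_filter_add_sum_filter_not univ (b · = 1)]
  congr 2
  refine filter_congr fun i _ => ?_
  rcases hb i with h | h <;> norm_num [h]

theorem sum_sign_mul_eq_sum_filter_sub_sum_filter (hb : ∀ i, b i = 1 ∨ b i = -1)
    (f : ι → ℝ) :
    ∑ i, b i * f i = ∑ i ∈ univ.filter (b · = 1), f i - ∑ i ∈ univ.filter (b · = -1), f i := by
  rw [sum_eq_sum_filter_add_sum_filter_of_sign hb, sub_eq_add_neg, ← sum_neg_distrib]
  congr 1 <;> refine sum_congr rfl fun i hi => ?_ <;> rw [(mem_filter.mp hi).2] <;> ring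

theorem sum_sum_sign_mul_eq_two_mul_sum_cross (hb : ∀ i, b i = 1 ∨ b i = -1)
    {g : ι → ι → ℝ} (hg : ∀ i j, g j i = -g i j) :
    ∑ i, ∑ j, b i * g i j =
      2 * ∑ i ∈ univ.filter (b · = 1), ∑ j ∈ univ.filter (b · = -1), g i j := by
  set P := univ.filter (b · = 1)
  set N := univ.filter (b · = -1)
  calc ∑ i, ∑ j, b i * g i j
      = ∑ i ∈ P, ∑ j, g i j - ∑ i ∈ N, ∑ j, g i j := by
        simp only [← mul_sum]
        exact sum_sign_mul_eq_sum_filter_sub_sum_filter hb _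
    _ = (∑ i ∈ P, ∑ j ∈ P, g i j + ∑ i ∈ P, ∑ j ∈ N, g i j) -
          (∑ i ∈ N, ∑ j ∈ P, g i j + ∑ i ∈ N, ∑ j ∈ N, g i j) := by
        simp only [sum_eq_sum_filter_add_sum_filter_of_sign hb (g _), sum_add_distrib, P, N]
    _ = 2 * ∑ i ∈ P, ∑ j ∈ N, g i j := by
        rw [P.sum_sum_eq_zero_of_antisymm hg, N.sum_sum_eq_zero_of_antisymm hg,
          P.sum_sum_eq_neg_of_antisymm N hg]
        ring

theorem abs_sub_le_iSup_iSup_abs_sub (a : ι → ℝ) (i j : ι) :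
    |a i - a j| ≤ ⨆ i, ⨆ j, |a i - a j| :=
  (le_ciSup (Set.finite_range _).bddAbove j).trans
    (le_ciSup (f := fun i => ⨆ j, |a i - a j|) (Set.finite_range _).bddAbove i)

end Fintype

theorem abs_sum_sum_mul_sub_mul_le (s t : Finset ι) {a w : ι → ℝ} {M : ℝ}
    (hw : ∀ i, 0 ≤ w i) (hM : ∀ i j, |a i - a j| ≤ M) :
    |∑ i ∈ s, ∑ j ∈ t, w i * (a i - a j) * w j| ≤ M * (∑ i ∈ s, w i) * ∑ j ∈ t, w j := by
  rw [mul_assoc, sum_mul_sum, mul_sum]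
  refine (abs_sum_le_sum_abs _ _).trans (sum_le_sum fun i _ => ?_)
  rw [mul_sum]
  refine (abs_sum_le_sum_abs _ _).trans (sum_le_sum fun j _ => ?_)
  rw [abs_mul, abs_mul, abs_of_nonneg (hw i), abs_of_nonneg (hw j)]
  linarith [mul_le_mul_of_nonneg_left (hM i j) (mul_nonneg (hw i) (hw j))]

open Finset in
/-- Antisymmetric-matrix estimate: for A_{ij} = α_i − α_j, positive weights w,
and signs b ∈ {−1,+1}^n,
|(b∘w)^T A w| ≤ 2‖α‖_d (∑_{i∈I₊} w_i)(∑_{j∈I₋} w_j). -/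
theorem antisymmetric_sign_estimate (n : ℕ) (a w b : Fin n → ℝ)
    (hw : ∀ i, 0 < w i) (hb : ∀ i, b i = 1 ∨ b i = -1) :
    |∑ i, ∑ j, (b i * w i) * (a i - a j) * w j| ≤
      2 * (⨆ i, ⨆ j, |a i - a j|) *
        (∑ i ∈ univ.filter fun i => b i = 1, w i) *
        (∑ j ∈ univ.filter fun j => b j = -1, w j) := by
  have hcross := sum_sum_sign_mul_eq_two_mul_sum_cross hb
    (g := fun i j => w i * (a i - a j) * w j) fun i j => by ring
  calc |∑ i, ∑ j, (b i * w i) * (a i - a j) * w j|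
      = 2 * |∑ i ∈ univ.filter (b · = 1), ∑ j ∈ univ.filter (b · = -1),
          w i * (a i - a j) * w j| := by
        simp only [mul_assoc] at hcross ⊢
        rw [hcross, abs_mul, abs_two]
    _ ≤ 2 * ((⨆ i, ⨆ j, |a i - a j|) * (∑ i ∈ univ.filter (b · = 1), w i) *
          ∑ j ∈ univ.filter (b · = -1), w j) := by
        gcongr
        exact abs_sum_sum_mul_sub_mul_le _ _ (fun i => (hw i).le) (abs_sub_le_iSup_iSup_abs_sub a)
    _ = _ := by ring
end

section
/- Let (Δ_k)_{k≥1} and (Λ_k)_{k≥1} be nonnegative sequences of vectors Δ_k = (Δ_k^0, ..., Δ_k^T), Λ_k = (Λ_k^0, ..., Λ_k^T) satisfying: Λ_k^0 = 0, Λ_k^t ≤ 2β Δ_k^{t−1} + Λ_k^{t−1} for 1 ≤ t ≤ T, and Δ_k^t ≤ L ∑_{j=0}^{T−t} S^j Λ_{k−1}^{t+j} for 0 ≤ t ≤ T, with constants L, β ≥ 0 and S ≥ 1. Then max_t Δ_k^t ≤ 2Lβ S (T S^{T+1} − (T+1)S^T + 1)/(S−1)^2 · max_t Δ_{k−1}^t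 (for S > 1). In particular, if this coefficient is < 1, then max_t Δ_k^t → 0 geometrically as k → ∞. -/
/-!
The occupancy bounds telescope: since `Λ_k^0 = 0` and each step adds at most `2β max_t Δ_k^t`,
`Λ_k^t ≤ 2β t max_t Δ_k^t`. Substituting into the bound for `Δ_{k+1}^t` and dominating
`∑_j (t + j) S^j` by `∑_{i ≤ T} i S^i` (as `S ≥ 1`) gives the contraction, with the constant
in closed form by the derivative of the geometric series. Iterating it gives geometric decay.
-/

open Finset Filter Topology

theorem sub_one_sq_mul_sum_range_natCast_mul_pow {R : Type*} [CommRing R] (x : R) (n : ℕ) :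
    (x - 1) ^ 2 * ∑ j ∈ range (n + 1), (j : R) * x ^ j =
      x * (n * x ^ (n + 1) - (n + 1) * x ^ n + 1) := by
  induction n with
  | zero => simp
  | succ n ih =>
    rw [sum_range_succ, mul_add, ih]
    push_cast
    ring

theorem sum_range_natCast_mul_pow_eq {K : Type*} [Field K] {x : K} (hx : x ≠ 1) (n : ℕ) :
    ∑ j ∈ range (n + 1), (j : K) * x ^ j =
      x * (n * x ^ (n + 1) - (n + 1) * x ^ n + 1) / (x - 1) ^ 2 := by
  rw [eq_div_iff (pow_ne_zero 2 (sub_ne_zero.mpr hx)), mul_comm,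
    sub_one_sq_mul_sum_range_natCast_mul_pow]

theorem le_natCast_mul_of_succ_le_add {f : ℕ → ℝ} {a : ℝ} {T : ℕ} (h₀ : f 0 = 0)
    (h : ∀ t < T, f (t + 1) ≤ f t + a) : ∀ t ≤ T, f t ≤ t * a := by
  intro t
  induction t with
  | zero => simp [h₀]
  | succ t ih =>
    intro ht
    push_cast
    linarith [h t ht, ih (by omega)]

theorem sum_range_natCast_add_mul_pow_le {S : ℝ} (hS : 1 ≤ S) {t T : ℕ} (ht : t ≤ T) :
    ∑ j ∈ range (T - t + 1), ((t + j : ℕ) : ℝ) * S ^ j ≤ ∑ i ∈ range (T + 1), (i : ℝ) * S ^ i :=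
  calc ∑ j ∈ range (T - t + 1), ((t + j : ℕ) : ℝ) * S ^ j
      ≤ ∑ j ∈ range (T - t + 1), ((t + j : ℕ) : ℝ) * S ^ (t + j) := by
        gcongr
        exact Nat.le_add_left _ _
    _ = ∑ i ∈ Ico t (T + 1), (i : ℝ) * S ^ i := by
        rw [sum_Ico_eq_sum_range, show T + 1 - t = T - t + 1 by omega]
    _ ≤ ∑ i ∈ range (T + 1), (i : ℝ) * S ^ i :=
        sum_le_sum_of_subset_of_nonneg (fun i hi ↦ mem_range.mpr (mem_Ico.mp hi).2)
          fun i _ _ ↦ by positivity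

theorem le_mul_sum_range_natCast_mul_pow {T t : ℕ} {L S a : ℝ} {Δ Λ : ℕ → ℝ} (hL : 0 ≤ L)
    (hS : 1 ≤ S) (ha : 0 ≤ a) (hΛ : ∀ s ≤ T, Λ s ≤ s * a)
    (hΔ : Δ t ≤ L * ∑ j ∈ range (T - t + 1), S ^ j * Λ (t + j)) (ht : t ≤ T) :
    Δ t ≤ L * a * ∑ i ∈ range (T + 1), (i : ℝ) * S ^ i :=
  calc Δ t ≤ L * ∑ j ∈ range (T - t + 1), S ^ j * Λ (t + j) := hΔ
    _ ≤ L * ∑ j ∈ range (T - t + 1), S ^ j * (((t + j : ℕ) : ℝ) * a) := by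
        gcongr with j hj
        exact hΛ _ (by have := mem_range.mp hj; omega)
    _ = L * a * ∑ j ∈ range (T - t + 1), ((t + j : ℕ) : ℝ) * S ^ j := by
        simp only [mul_sum]
        exact sum_congr rfl fun _ _ ↦ by ring
    _ ≤ L * a * ∑ i ∈ range (T + 1), (i : ℝ) * S ^ i := by
        gcongr
        exact sum_range_natCast_add_mul_pow_le hS ht

theorem tendsto_zero_of_succ_le_mul {u : ℕ → ℝ} {c : ℝ} (hu : ∀ n, 0 ≤ u n) (hc₀ : 0 ≤ c)
    (hc₁ : c < 1) (h : ∀ n, u (n + 1) ≤ c * u n) : Tendsto u atTop (𝓝 0) := by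
  have hgeom : Tendsto (fun n ↦ c ^ n * u 0) atTop (𝓝 0) := by
    simpa using (tendsto_pow_atTop_nhds_zero_of_lt_one hc₀ hc₁).mul_const (u 0)
  exact squeeze_zero hu (fun n ↦ le_geom hc₀ n fun k _ ↦ h k) hgeom

open Finset in
theorem forward_backward_contraction_general (T : ℕ)
    (L β S : ℝ) (hL : 0 ≤ L) (hβ : 0 ≤ β) (hS : 1 < S)
    (Δ Λ : ℕ → ℕ → ℝ)
    (hΔnn : ∀ k t, 0 ≤ Δ k t)
    (hΛ0 : ∀ k, Λ k 0 = 0)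
    (hΛ : ∀ k, 1 ≤ k → ∀ t, 1 ≤ t → t ≤ T →
      Λ k t ≤ 2 * β * Δ k (t - 1) + Λ k (t - 1))
    (hΔ : ∀ k, 1 ≤ k → ∀ t, t ≤ T →
      Δ k t ≤ L * ∑ j ∈ range (T - t + 1), S ^ j * Λ (k - 1) (t + j)) :
    (∀ k, 2 ≤ k →
      (range (T + 1)).sup' Finset.nonempty_range_add_one (Δ k) ≤
        (2 * L * β * S * ((T : ℝ) * S ^ (T + 1) - (T + 1) * S ^ T + 1) /
            (S - 1) ^ 2) *
          (range (T + 1)).sup' Finset.nonempty_range_add_one (Δ (k - 1))) ∧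
      (2 * L * β * S * ((T : ℝ) * S ^ (T + 1) - (T + 1) * S ^ T + 1) /
          (S - 1) ^ 2 < 1 →
        Filter.Tendsto
          (fun k => (range (T + 1)).sup' Finset.nonempty_range_add_one (Δ k))
          Filter.atTop (nhds 0)) := by
  set M : ℕ → ℝ := fun k ↦ (range (T + 1)).sup' nonempty_range_add_one (Δ k)
  have hΔ_le_M : ∀ k t, t ≤ T → Δ k t ≤ M k := fun k t ht ↦
    le_sup' (Δ k) (mem_range.mpr (Nat.lt_succ_of_le ht))
  have hM_nonneg : ∀ k, 0 ≤ M k := fun k ↦ (hΔnn k 0).trans (hΔ_le_M k 0 T.zero_le)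
  have hΛ_le : ∀ k, 1 ≤ k → ∀ t ≤ T, Λ k t ≤ t * (2 * β * M k) := fun k hk ↦
    le_natCast_mul_of_succ_le_add (hΛ0 k) fun t ht ↦ by
      have hrec := hΛ k hk (t + 1) (by omega) ht
      rw [Nat.add_sub_cancel] at hrec
      linarith [mul_le_mul_of_nonneg_left (hΔ_le_M k t ht.le) (by positivity : (0 : ℝ) ≤ 2 * β)]
  set K := ∑ i ∈ range (T + 1), (i : ℝ) * S ^ i with hK
  have hC : 2 * L * β * S * ((T : ℝ) * S ^ (T + 1) - (T + 1) * S ^ T + 1) / (S - 1) ^ 2 =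
      2 * L * β * K := by
    rw [hK, sum_range_natCast_mul_pow_eq hS.ne', mul_assoc (2 * L * β), mul_div_assoc]
  have hstep : ∀ k, 2 ≤ k → M k ≤ 2 * L * β * K * M (k - 1) := by
    intro k hk
    refine sup'_le _ _ fun t ht ↦ ?_
    have htT : t ≤ T := Nat.lt_succ_iff.mp (mem_range.mp ht)
    exact (le_mul_sum_range_natCast_mul_pow hL hS.le (mul_nonneg (by positivity) (hM_nonneg _))
      (hΛ_le (k - 1) (by omega)) (hΔ k (by omega) t htT) htT).trans_eq (by ring)
  rw [hC]
  refine ⟨hstep, fun hC₁ ↦ ?_⟩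
  exact (tendsto_add_atTop_iff_nat 1).mp (tendsto_zero_of_succ_le_mul (fun n ↦ hM_nonneg _)
    (by positivity) hC₁ fun n ↦ hstep (n + 2) (by omega))

open Finset in
/-- Abstract recursion underlying the convergence of the forward-backward
algorithm: under the coupled recursive bounds on Δ (Q-function changes) and
Λ (occupancy-measure changes), the max of Δ contracts across iterations with
coefficient C = 2LβS(T S^{T+1} − (T+1)S^T + 1)/(S−1)², and if C < 1 then
max_t Δ_k^t → 0 as k → ∞. -/
theorem forward_backward_contraction (T : ℕ) (hT : 1 ≤ T)
    (L β S : ℝ) (hL : 0 ≤ L) (hβ : 0 ≤ β) (hS : 1 < S)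
    (Δ Λ : ℕ → ℕ → ℝ)
    (hΔnn : ∀ k t, 0 ≤ Δ k t) (hΛnn : ∀ k t, 0 ≤ Λ k t)
    (hΛ0 : ∀ k, Λ k 0 = 0)
    (hΛ : ∀ k, 1 ≤ k → ∀ t, 1 ≤ t → t ≤ T →
      Λ k t ≤ 2 * β * Δ k (t - 1) + Λ k (t - 1))
    (hΔ : ∀ k, 1 ≤ k → ∀ t, t ≤ T →
      Δ k t ≤ L * ∑ j ∈ range (T - t + 1), S ^ j * Λ (k - 1) (t + j)) :
    (∀ k, 2 ≤ k →
      (range (T + 1)).sup' Finset.nonempty_range_add_one (Δ k) ≤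
        (2 * L * β * S * ((T : ℝ) * S ^ (T + 1) - (T + 1) * S ^ T + 1) /
            (S - 1) ^ 2) *
          (range (T + 1)).sup' Finset.nonempty_range_add_one (Δ (k - 1))) ∧
      (2 * L * β * S * ((T : ℝ) * S ^ (T + 1) - (T + 1) * S ^ T + 1) /
          (S - 1) ^ 2 < 1 →
        Filter.Tendsto
          (fun k => (range (T + 1)).sup' Finset.nonempty_range_add_one (Δ k))
          Filter.atTop (nhds 0)) :=
  forward_backward_contraction_general T L β S hL hβ hS Δ Λ hΔnn hΛ0 hΛ hΔ
end
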